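/- arXiv:2109.13144 — 2 statements merged into one kernel-verified Lean document; each statement's English description precedes it below -/
import Mathlib

section
/- In the ring ℂ[[v]] of formal power series, let u := 1 + v² and let σ : ℂ[[v]] → ℂ[[v]] be the ℂ-algebra automorphism sending v to −v. Let ρ be a positive integer, a ∈ ℤ, let J range over a finite index set, and let A_J, B_J be units of ℂ[[v]]. Assume the blowup identity Σ_J A_J^{−ρ−a}·B_J^{−1} = u^{(ρ+a)(ρ+a−1)/2} holds. Define A′_J := u^{1−ρ}·σ(A_J)^{−1} and B′_J := u^{ρ(ρ−1)/2}·σ(A_J)^{ρ}·σ(B_J). Then Σ_J (A′_J)^{a}·(B′_J)^{−1} = u^{a(a+1)/2}. -/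
open PowerSeries

private lemma half_mul_succ (n : ℤ) : 2 * ((n * (n + 1)) / 2) = n * (n + 1) :=
  Int.two_mul_ediv_two_of_even (Int.even_mul_succ_self n)

private lemma half_mul_pred (n : ℤ) : 2 * ((n * (n - 1)) / 2) = n * (n - 1) := by
  have := half_mul_succ (n - 1)
  have h : (n - 1) * (n - 1 + 1) = n * (n - 1) := by ring
  rw [h] at this
  exact this

private lemma aux_group {G : Type*} [CommGroup G] (u A B : G) (r a D : ℤ) :
    (u ^ (1 - r) * A⁻¹) ^ a * (u ^ D * A ^ r * B)⁻¹
      = u ^ (a * (1 - r) - D) * (A ^ (-r - a) * B⁻¹) := by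
  rw [mul_zpow, ← zpow_mul, inv_zpow, ← zpow_neg, mul_inv, mul_inv,
    ← zpow_neg A r, zpow_sub u,
    show (-r : ℤ) - a = -r + -a by ring, zpow_add, mul_comm (1 - r) a]
  ac_rfl

/-- Remark 3.4(1): if the blowup identity `Σ_J A_J^{-ρ-a} B_J⁻¹ = u^{(ρ+a)(ρ+a-1)/2}`
holds (`u = 1 + v²`), then its Serre-duality transform, with
`A'_J = u^{1-ρ} σ(A_J)⁻¹`, `B'_J = u^{ρ(ρ-1)/2} σ(A_J)^ρ σ(B_J)` and `σ : v ↦ -v`,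
satisfies `Σ_J (A'_J)^a (B'_J)⁻¹ = u^{a(a+1)/2}`. -/
theorem serre_duality_blowup (ρ : ℕ) (hρ : 0 < ρ) (a : ℤ) {ι : Type*} (s : Finset ι)
    (A B : ι → (PowerSeries ℂ)ˣ)
    (σ : PowerSeries ℂ ≃ₐ[ℂ] PowerSeries ℂ) (hσ : σ X = -X)
    (u : (PowerSeries ℂ)ˣ) (hu : (u : PowerSeries ℂ) = 1 + X ^ 2)
    (hblow : ∑ J ∈ s, ((A J ^ (-(ρ : ℤ) - a) * (B J)⁻¹ : (PowerSeries ℂ)ˣ) : PowerSeries ℂ)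
      = ((u ^ ((((ρ : ℤ) + a) * ((ρ : ℤ) + a - 1)) / 2) : (PowerSeries ℂ)ˣ) : PowerSeries ℂ))
    (A' B' : ι → (PowerSeries ℂ)ˣ)
    (hA' : ∀ J, A' J = u ^ (1 - (ρ : ℤ)) *
      (Units.map (σ : PowerSeries ℂ →* PowerSeries ℂ) (A J))⁻¹)
    (hB' : ∀ J, B' J = u ^ (((ρ : ℤ) * ((ρ : ℤ) - 1)) / 2) *
      (Units.map (σ : PowerSeries ℂ →* PowerSeries ℂ) (A J)) ^ (ρ : ℤ) *
      Units.map (σ : PowerSeries ℂ →* PowerSeries ℂ) (B J)) :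
    ∑ J ∈ s, ((A' J ^ a * (B' J)⁻¹ : (PowerSeries ℂ)ˣ) : PowerSeries ℂ)
      = ((u ^ ((a * (a + 1)) / 2) : (PowerSeries ℂ)ˣ) : PowerSeries ℂ) := by
  set m : (PowerSeries ℂ)ˣ →* (PowerSeries ℂ)ˣ :=
    Units.map (σ : PowerSeries ℂ →* PowerSeries ℂ) with hm
  have hmu : m u = u := by
    ext
    simp only [hm, Units.coe_map, MonoidHom.coe_coe, hu, map_add, map_one, map_pow, hσ]
    ring
  set c : ℤ := a * (1 - (ρ : ℤ)) - ((ρ : ℤ) * ((ρ : ℤ) - 1)) / 2 with hc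
  have key : ∀ J, (A' J ^ a * (B' J)⁻¹ : (PowerSeries ℂ)ˣ)
      = u ^ c * (m (A J ^ (-(ρ : ℤ) - a) * (B J)⁻¹)) := by
    intro J
    rw [hA' J, hB' J, map_mul, map_zpow, map_inv, hc]
    exact aux_group u (m (A J)) (m (B J)) (ρ : ℤ) a _
  have hexp : c + (((ρ : ℤ) + a) * ((ρ : ℤ) + a - 1)) / 2 = (a * (a + 1)) / 2 := by
    have h1 := half_mul_pred ((ρ : ℤ))
    have h2 := half_mul_pred ((ρ : ℤ) + a)
    have h3 := half_mul_succ a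
    have h4 : 2 * (c + (((ρ : ℤ) + a) * ((ρ : ℤ) + a - 1)) / 2)
        = 2 * ((a * (a + 1)) / 2) := by
      rw [hc]; linear_combination -h1 + h2 - h3
    linarith
  calc ∑ J ∈ s, ((A' J ^ a * (B' J)⁻¹ : (PowerSeries ℂ)ˣ) : PowerSeries ℂ)
      = ∑ J ∈ s, (((u ^ c : (PowerSeries ℂ)ˣ) : PowerSeries ℂ) *
          σ ((A J ^ (-(ρ : ℤ) - a) * (B J)⁻¹ : (PowerSeries ℂ)ˣ) : PowerSeries ℂ)) := by
        refine Finset.sum_congr rfl fun J _ => ?_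
        rw [key J, Units.val_mul, hm, Units.coe_map]
        rfl
    _ = ((u ^ c : (PowerSeries ℂ)ˣ) : PowerSeries ℂ) *
          σ (∑ J ∈ s, ((A J ^ (-(ρ : ℤ) - a) * (B J)⁻¹ : (PowerSeries ℂ)ˣ) : PowerSeries ℂ)) := by
        rw [← Finset.mul_sum, map_sum]
    _ = ((u ^ c : (PowerSeries ℂ)ˣ) : PowerSeries ℂ) *
          ((m (u ^ ((((ρ : ℤ) + a) * ((ρ : ℤ) + a - 1)) / 2)) : (PowerSeries ℂ)ˣ) :
            PowerSeries ℂ) := by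
        rw [hblow, hm, Units.coe_map]; rfl
    _ = ((u ^ ((a * (a + 1)) / 2) : (PowerSeries ℂ)ˣ) : PowerSeries ℂ) := by
        rw [map_zpow, hmu, ← Units.val_mul, ← zpow_add, hexp]
end

section
/- In the field ℂ(w) of rational functions over ℂ, define A₀ := (1 + w)/(1 + w²), A₁ := (1 − w)/(1 + w²), B₀ := 2(1 + w²)/(1 + w)², B₁ := 2(1 + w²)/(1 − w)². Then for every integer a with −2 ≤ a ≤ 0: A₀^{a}·B₀^{−1} + A₁^{a}·B₁^{−1} = (1 + w²)^{a(a+1)/2}. -/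
section aux

open RatFunc Polynomial

lemma aux_one_add_X_ne : (1 + RatFunc.X : RatFunc ℂ) ≠ 0 := by
  have : (1 + RatFunc.X : RatFunc ℂ) = algebraMap (Polynomial ℂ) _ (1 + Polynomial.X) := by
    simp [map_add, RatFunc.algebraMap_X]
  rw [this]
  exact RatFunc.algebraMap_ne_zero (by
    intro h
    have := congrArg (Polynomial.eval 0) h
    simp at this)

lemma aux_one_sub_X_ne : (1 - RatFunc.X : RatFunc ℂ) ≠ 0 := by
  have : (1 - RatFunc.X : RatFunc ℂ) = algebraMap (Polynomial ℂ) _ (1 - Polynomial.X) := by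
    simp [map_sub, RatFunc.algebraMap_X]
  rw [this]
  exact RatFunc.algebraMap_ne_zero (by
    intro h
    have := congrArg (Polynomial.eval 0) h
    simp at this)

lemma aux_one_add_X_sq_ne : (1 + RatFunc.X ^ 2 : RatFunc ℂ) ≠ 0 := by
  have : (1 + RatFunc.X ^ 2 : RatFunc ℂ) = algebraMap (Polynomial ℂ) _ (1 + Polynomial.X ^ 2) := by
    simp [map_add, map_pow, RatFunc.algebraMap_X]
  rw [this]
  exact RatFunc.algebraMap_ne_zero (by
    intro h
    have := congrArg (Polynomial.eval 0) h
    simp at this)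

end aux

/-- Verification of the blowup formula (3.1) for `ρ = 2`, `r = 2`: in `ℂ(w)`, with
`A₀ = (1+w)/(1+w²)`, `A₁ = (1-w)/(1+w²)`, `B₀ = 2(1+w²)/(1+w)²`, `B₁ = 2(1+w²)/(1-w)²`,
for `-2 ≤ a ≤ 0` one has `A₀^a B₀⁻¹ + A₁^a B₁⁻¹ = (1+w²)^{a(a+1)/2}`. -/
theorem blowup_rank_two_r_eq_two (a : ℤ) (h1 : -2 ≤ a) (h2 : a ≤ 0) :
    ((1 + RatFunc.X : RatFunc ℂ) / (1 + RatFunc.X ^ 2)) ^ a *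
        (2 * (1 + RatFunc.X ^ 2) / (1 + RatFunc.X) ^ 2)⁻¹
      + ((1 - RatFunc.X : RatFunc ℂ) / (1 + RatFunc.X ^ 2)) ^ a *
        (2 * (1 + RatFunc.X ^ 2) / (1 - RatFunc.X) ^ 2)⁻¹
      = (1 + RatFunc.X ^ 2) ^ (a * (a + 1) / 2) := by
  have hp := aux_one_add_X_ne
  have hm := aux_one_sub_X_ne
  have hs := aux_one_add_X_sq_ne
  have h2' : (2 : RatFunc ℂ) ≠ 0 := by
    have : (2 : RatFunc ℂ) = algebraMap (Polynomial ℂ) _ 2 := (map_ofNat _ 2).symm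
    rw [this]; exact RatFunc.algebraMap_ne_zero (by norm_num)
  interval_cases a <;> norm_num [zpow_neg, zpow_ofNat] <;> field_simp <;> ring
end
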